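/- arXiv:2402.15250 — 4 statements merged into one kernel-verified Lean document; each statement's English description precedes it below -/
import Mathlib

section
/- Let g : ℝ → ℝ be defined by g(z) = z∫₀^{t₀} f'(z e^{β(θ)}) dθ − ∫₀^{t₀} f(z e^{β(θ)}) e^{−β(θ)} dθ, where f : ℝ → ℝ is C¹ and convex (so f' is nondecreasing) and β : [0,t₀] → ℝ is continuous. Then g is nondecreasing on [0,∞): for a ≥ a₁ ≥ 0, g(a) ≥ g(a₁). -/
/-!
Write `λ = exp (β θ)`. The integrand of `g z` is `(z λ f'(z λ) - f(z λ)) / λ`, so it suffices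
that `φ(x) = x f'(x) - f(x)` is nondecreasing on `[0, ∞)`. For `0 ≤ x ≤ y` the mean value
theorem and monotonicity of `f'` give `f y - f x ≤ f'(y) (y - x)`, hence
`φ(y) - φ(x) ≥ x (f'(y) - f'(x)) ≥ 0`; integrating over `θ ∈ [0, t₀]` gives the claim.
-/

open Set Real intervalIntegral

theorem monotoneOn_mul_deriv_sub {f : ℝ → ℝ} (hf : Differentiable ℝ f)
    (hf' : Monotone (deriv f)) :
    MonotoneOn (fun x => x * deriv f x - f x) (Ici 0) := by
  intro x hx y _ hxy
  have hslope : f y - f x ≤ deriv f y * (y - x) :=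
    (convex_Iic y).image_sub_le_mul_sub_of_deriv_le hf.continuous.continuousOn
      hf.differentiableOn (fun c hc => hf' (mem_Iic.1 (interior_subset hc))) x hxy
      y (mem_Iic.2 le_rfl) hxy
  have hderiv : x * deriv f x ≤ x * deriv f y := mul_le_mul_of_nonneg_left (hf' hxy) hx
  dsimp only
  linarith

theorem monotoneOn_mul_deriv_comp_mul_sub {f : ℝ → ℝ} (hf : Differentiable ℝ f)
    (hf' : Monotone (deriv f)) {l : ℝ} (hl : 0 < l) :
    MonotoneOn (fun z => z * deriv f (z * l) - f (z * l) * l⁻¹) (Ici 0) := by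
  intro x hx y hy hxy
  have hφ := monotoneOn_mul_deriv_sub hf hf' (mem_Ici.2 (mul_nonneg hx hl.le))
    (mem_Ici.2 (mul_nonneg hy hl.le)) (mul_le_mul_of_nonneg_right hxy hl.le)
  have hscale : ∀ z, z * deriv f (z * l) - f (z * l) * l⁻¹
      = (z * l * deriv f (z * l) - f (z * l)) * l⁻¹ := fun z => by field_simp
  simp only [hscale]
  exact mul_le_mul_of_nonneg_right hφ (inv_nonneg.2 hl.le)

theorem stmt4 (f β g : ℝ → ℝ) (t₀ : ℝ) (ht : 0 < t₀)
    (hf : ContDiff ℝ 1 f) (hf' : Monotone (deriv f)) (hβ : Continuous β)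
    (hg : ∀ z : ℝ, g z = z * (∫ θ in (0:ℝ)..t₀, deriv f (z * Real.exp (β θ)))
      - ∫ θ in (0:ℝ)..t₀, f (z * Real.exp (β θ)) * Real.exp (-β θ)) :
    ∀ a a₁ : ℝ, 0 ≤ a₁ → a₁ ≤ a → g a₁ ≤ g a := by
  intro a a₁ ha₁ haa
  have hdf : Continuous (deriv f) := hf.continuous_deriv le_rfl
  have hfc : Continuous f := hf.continuous
  have hg_integral : ∀ z, g z = ∫ θ in (0:ℝ)..t₀,
      (z * deriv f (z * exp (β θ)) - f (z * exp (β θ)) * exp (-β θ)) := fun z => by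
    rw [hg z, ← integral_const_mul, integral_sub (Continuous.intervalIntegrable (by fun_prop) _ _)
      (Continuous.intervalIntegrable (by fun_prop) _ _)]
  rw [hg_integral, hg_integral]
  refine integral_mono_on ht.le (Continuous.intervalIntegrable (by fun_prop) _ _)
    (Continuous.intervalIntegrable (by fun_prop) _ _) fun θ _ => ?_
  simpa only [exp_neg] using monotoneOn_mul_deriv_comp_mul_sub (hf.differentiable one_ne_zero)
    hf' (exp_pos (β θ)) ha₁ (ha₁.trans haa) haa
end

section
/- With g as above (g(z) = z∫₀^{t₀} f'(z e^{β(θ)}) dθ − ∫₀^{t₀} f(z e^{β(θ)}) e^{−β(θ)} dθ, f C¹ convex, β continuous), g is nonincreasing on (−∞, 0]: for b ≤ b₁ ≤ 0, g(b) ≥ g(b₁). -/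
/-!
On each ray `θ ↦ z * exp (β θ)` the integrand of `g z` equals `exp (-β θ) * φ (z * exp (β θ))`
with `φ x = x * f' x - f x`. By convexity, `f y - f x ≥ f' x * (y - x)`, and for `x ≤ y ≤ 0` this
together with `y * f' y ≤ y * f' x` shows that `φ` is antitone on `(-∞, 0]`. Since `z ↦ z * exp (β θ)`
preserves `(-∞, 0]` and order, `g` is antitone there as well.
-/

open Real Set

theorem antitoneOn_mul_deriv_sub_of_monotone_deriv {f : ℝ → ℝ} (hf : Differentiable ℝ f)
    (hf' : Monotone (deriv f)) : AntitoneOn (fun x => x * deriv f x - f x) (Iic 0) := by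
  intro x _ y hy hxy
  rcases hxy.eq_or_lt with rfl | hlt
  · rfl
  have tangent : deriv f x * (y - x) ≤ f y - f x := by
    have := (hf'.convexOn_univ_of_deriv hf).deriv_le_slope (mem_univ x) (mem_univ y) hlt (hf x)
    rwa [slope_def_field, le_div_iff₀ (sub_pos.2 hlt)] at this
  have hy_deriv : y * deriv f y ≤ y * deriv f x := mul_le_mul_of_nonpos_left (hf' hxy) hy
  simp only
  linarith

theorem intervalIntegral_mul_deriv_comp_sub {f β : ℝ → ℝ} (hf : Continuous f)
    (hf' : Continuous (deriv f)) (hβ : Continuous β) (a b z : ℝ) :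
    z * (∫ θ in a..b, deriv f (z * exp (β θ))) - ∫ θ in a..b, f (z * exp (β θ)) * exp (-β θ) =
      ∫ θ in a..b, exp (-β θ) *
        (z * exp (β θ) * deriv f (z * exp (β θ)) - f (z * exp (β θ))) := by
  rw [← intervalIntegral.integral_const_mul, ← intervalIntegral.integral_sub
    (by apply Continuous.intervalIntegrable; fun_prop)
    (by apply Continuous.intervalIntegrable; fun_prop)]
  refine intervalIntegral.integral_congr fun θ _ => ?_
  simp only [exp_neg]
  field_simp

theorem stmt5 (f β g : ℝ → ℝ) (t₀ : ℝ) (ht : 0 < t₀)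
    (hf : ContDiff ℝ 1 f) (hf' : Monotone (deriv f)) (hβ : Continuous β)
    (hg : ∀ z : ℝ, g z = z * (∫ θ in (0:ℝ)..t₀, deriv f (z * Real.exp (β θ)))
      - ∫ θ in (0:ℝ)..t₀, f (z * Real.exp (β θ)) * Real.exp (-β θ)) :
    ∀ b b₁ : ℝ, b ≤ b₁ → b₁ ≤ 0 → g b₁ ≤ g b := by
  intro b b₁ hbb hb₁
  have hfc : Continuous f := hf.continuous
  have hfc' : Continuous (deriv f) := hf.continuous_deriv le_rfl
  have hφ := antitoneOn_mul_deriv_sub_of_monotone_deriv (hf.differentiable one_ne_zero) hf'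
  rw [hg, hg, intervalIntegral_mul_deriv_comp_sub hfc hfc' hβ,
    intervalIntegral_mul_deriv_comp_sub hfc hfc' hβ]
  refine intervalIntegral.integral_mono_on ht.le
    (by apply Continuous.intervalIntegrable; fun_prop)
    (by apply Continuous.intervalIntegrable; fun_prop) fun θ _ => ?_
  have hpos := exp_pos (β θ)
  refine mul_le_mul_of_nonneg_left ?_ (exp_pos _).le
  exact hφ (mul_nonpos_of_nonpos_of_nonneg (hbb.trans hb₁) hpos.le)
    (mul_nonpos_of_nonpos_of_nonneg hb₁ hpos.le) (by gcongr)
end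

section
/- Let u : ℝ → ℝ be given by u(x) = e^{B} Ψ(x − y(x)) where B ∈ ℝ, y : ℝ → ℝ is nondecreasing with |x − y(x)| ≤ Ct for all x, and Ψ : ℝ → ℝ satisfies |Ψ(z₁) − Ψ(z₂)| ≤ K|z₁ − z₂|^{1/p} for some K > 0, p ≥ 1. Then for any a < b, the p-variation of u on [a,b] satisfies TV^{1/p}(u)[a,b] = sup over subdivisions a = x₀ < ⋯ < x_m = b of Σ |u(x_k) − u(x_{k−1})|^p ≤ e^{pB} K^p (2(b−a) + 2Ct). In particular u ∈ BV^{1/p}([a,b]). -/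
/-!
Each increment of `u` over `[x_{k-1}, x_k]` is controlled, through the Hölder bound on `Ψ`, by
`|Δx - Δy|`, and monotonicity of `y` gives `|Δx - Δy| ≤ Δx + Δy`. Raising to the power `p`
undoes the Hölder exponent `1/p`, so the `p`-th powers of the increments are dominated by the
increments of the nondecreasing function `x + y(x)`, whose sum telescopes to
`(b - a) + (y b - y a) ≤ 2 (b - a) + 2 C t`.
-/

open Finset

lemma Fin.sum_succ_sub_castSucc {M : Type*} [AddCommGroup M] {m : ℕ} (f : Fin (m + 1) → M) :
    ∑ i : Fin m, (f i.succ - f i.castSucc) = f (Fin.last m) - f 0 := by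
  have h0 := Fin.sum_univ_succ f
  have hlast := Fin.sum_univ_castSucc f
  rw [sum_sub_distrib]
  linear_combination (norm := abel_nf) hlast - h0

lemma sum_le_sub_of_le_sub {α : Type*} [Preorder α] {m : ℕ} {x : Fin (m + 1) → α}
    (hx : Monotone x) {F : α → α → ℝ} {g : α → ℝ} (hF : ∀ s t, s ≤ t → F s t ≤ g t - g s) :
    ∑ i : Fin m, F (x i.castSucc) (x i.succ) ≤ g (x (Fin.last m)) - g (x 0) := by
  calc ∑ i : Fin m, F (x i.castSucc) (x i.succ)
      ≤ ∑ i : Fin m, (g (x i.succ) - g (x i.castSucc)) :=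
        sum_le_sum fun i _ => hF _ _ (hx (Fin.castSucc_le_succ i))
    _ = g (x (Fin.last m)) - g (x 0) := Fin.sum_succ_sub_castSucc (g ∘ x)

lemma nonneg_of_abs_sub_le_mul_rpow {Ψ : ℝ → ℝ} {K r : ℝ}
    (hΨ : ∀ z₁ z₂ : ℝ, |Ψ z₁ - Ψ z₂| ≤ K * |z₁ - z₂| ^ r) : 0 ≤ K := by
  simpa using (abs_nonneg _).trans (hΨ 1 0)

lemma rpow_abs_sub_le_of_abs_sub_le_mul_rpow {Ψ : ℝ → ℝ} {K p : ℝ} (hp : 0 < p)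
    (hΨ : ∀ z₁ z₂ : ℝ, |Ψ z₁ - Ψ z₂| ≤ K * |z₁ - z₂| ^ (1 / p)) (z₁ z₂ : ℝ) :
    |Ψ z₁ - Ψ z₂| ^ p ≤ K ^ p * |z₁ - z₂| := by
  have hK := nonneg_of_abs_sub_le_mul_rpow hΨ
  calc |Ψ z₁ - Ψ z₂| ^ p ≤ (K * |z₁ - z₂| ^ (1 / p)) ^ p := by gcongr; exact hΨ z₁ z₂
    _ = K ^ p * |z₁ - z₂| := by
      rw [Real.mul_rpow hK (by positivity), ← Real.rpow_mul (abs_nonneg _),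
        one_div_mul_cancel hp.ne', Real.rpow_one]

lemma abs_sub_sub_sub_le_of_monotone {y : ℝ → ℝ} (hy : Monotone y) {s t : ℝ} (hst : s ≤ t) :
    |(t - y t) - (s - y s)| ≤ (t + y t) - (s + y s) := by
  have := hy hst
  rw [abs_le]
  constructor <;> linarith

lemma rpow_abs_sub_comp_sub_le {Ψ y : ℝ → ℝ} {K p : ℝ} (hp : 0 < p)
    (hΨ : ∀ z₁ z₂ : ℝ, |Ψ z₁ - Ψ z₂| ≤ K * |z₁ - z₂| ^ (1 / p)) (hy : Monotone y)
    {s t : ℝ} (hst : s ≤ t) :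
    |Ψ (t - y t) - Ψ (s - y s)| ^ p ≤ K ^ p * ((t + y t) - (s + y s)) := by
  have hK := nonneg_of_abs_sub_le_mul_rpow hΨ
  exact (rpow_abs_sub_le_of_abs_sub_le_mul_rpow hp hΨ _ _).trans
    (by gcongr; exact abs_sub_sub_sub_le_of_monotone hy hst)

lemma rpow_abs_exp_mul_sub (B p a b : ℝ) :
    |Real.exp B * a - Real.exp B * b| ^ p = Real.exp (p * B) * |a - b| ^ p := by
  rw [← mul_sub, abs_mul, abs_of_pos (Real.exp_pos B), Real.mul_rpow (Real.exp_pos B).le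
    (abs_nonneg _), ← Real.exp_mul, mul_comm B]

theorem stmt11_general (B C t K p : ℝ) (hp : 1 ≤ p)
    (y Ψ u : ℝ → ℝ) (hy : Monotone y) (hyb : ∀ x : ℝ, |x - y x| ≤ C * t)
    (hΨ : ∀ z₁ z₂ : ℝ, |Ψ z₁ - Ψ z₂| ≤ K * |z₁ - z₂| ^ (1 / p))
    (hu : ∀ x : ℝ, u x = Real.exp B * Ψ (x - y x)) :
    ∀ a b : ℝ, a < b → ∀ (m : ℕ) (x : Fin (m + 1) → ℝ), StrictMono x →
      x 0 = a → x (Fin.last m) = b →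
      ∑ i : Fin m, |u (x i.succ) - u (x i.castSucc)| ^ p ≤
        Real.exp (p * B) * K ^ p * (2 * (b - a) + 2 * C * t) := by
  intro a b _ m x hx hxa hxb
  set c := Real.exp (p * B) * K ^ p
  have hincr : ∀ s t, s ≤ t → |u t - u s| ^ p ≤ c * (t + y t) - c * (s + y s) := by
    intro s t hst
    rw [hu, hu, rpow_abs_exp_mul_sub, ← mul_sub, mul_assoc]
    gcongr
    exact rpow_abs_sub_comp_sub_le (one_pos.trans_le hp) hΨ hy hst
  have hsum := sum_le_sub_of_le_sub hx.monotone hincr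
  rw [hxa, hxb, ← mul_sub] at hsum
  have hK := nonneg_of_abs_sub_le_mul_rpow hΨ
  refine hsum.trans (mul_le_mul_of_nonneg_left ?_ (by positivity))
  linarith [abs_le.mp (hyb a), abs_le.mp (hyb b)]

theorem stmt11 (B C t K p : ℝ) (hp : 1 ≤ p) (hK : 0 < K) (hC : 0 ≤ C) (ht : 0 ≤ t)
    (y Ψ u : ℝ → ℝ) (hy : Monotone y) (hyb : ∀ x : ℝ, |x - y x| ≤ C * t)
    (hΨ : ∀ z₁ z₂ : ℝ, |Ψ z₁ - Ψ z₂| ≤ K * |z₁ - z₂| ^ (1 / p))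
    (hu : ∀ x : ℝ, u x = Real.exp B * Ψ (x - y x)) :
    ∀ a b : ℝ, a < b → ∀ (m : ℕ) (x : Fin (m + 1) → ℝ), StrictMono x →
      x 0 = a → x (Fin.last m) = b →
      ∑ i : Fin m, |u (x i.succ) - u (x i.castSucc)| ^ p ≤
        Real.exp (p * B) * K ^ p * (2 * (b - a) + 2 * C * t) :=
  stmt11_general B C t K p hp y Ψ u hy hyb hΨ hu
end

section
/- Suppose F_+ : [0,a₀] → [0,∞) is continuous strictly increasing with F_+(0) = 0, F_− : [b₀,0] → [0,∞) is continuous strictly decreasing with F_−(0) = 0, and G : [b₀,a₀] → [0,∞) is continuous, increasing on [0,a₀] and decreasing on [b₀,0] with G(0)=0 and G(a₀) = G(b₀). Then for every d with 0 < d ≤ min{F_+(a₀), F_−(b₀)}, there exist a ∈ [0,a₀] and b ∈ [b₀,0] such that G(a) = G(b) and F_+(a) + F_−(b) = d. -/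
theorem stmt12 (a₀ b₀ : ℝ) (ha₀ : 0 < a₀) (hb₀ : b₀ < 0)
    (Fp Fm G : ℝ → ℝ)
    (hFpc : ContinuousOn Fp (Set.Icc 0 a₀)) (hFpm : StrictMonoOn Fp (Set.Icc 0 a₀))
    (hFp0 : Fp 0 = 0)
    (hFmc : ContinuousOn Fm (Set.Icc b₀ 0)) (hFmm : StrictAntiOn Fm (Set.Icc b₀ 0))
    (hFm0 : Fm 0 = 0)
    (hGc : ContinuousOn G (Set.Icc b₀ a₀))
    (hGmono : MonotoneOn G (Set.Icc 0 a₀)) (hGanti : AntitoneOn G (Set.Icc b₀ 0))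
    (hG0 : G 0 = 0) (hGend : G a₀ = G b₀) :
    ∀ d : ℝ, 0 < d → d ≤ min (Fp a₀) (Fm b₀) →
      ∃ a ∈ Set.Icc (0:ℝ) a₀, ∃ b ∈ Set.Icc b₀ (0:ℝ),
        G a = G b ∧ Fp a + Fm b = d := by
  intro d hd hdmin
  have hIccP : Set.Icc (0:ℝ) a₀ ⊆ Set.Icc b₀ a₀ := Set.Icc_subset_Icc hb₀.le le_rfl
  have hIccM : Set.Icc b₀ (0:ℝ) ⊆ Set.Icc b₀ a₀ := Set.Icc_subset_Icc le_rfl ha₀.le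
  have hGcP : ContinuousOn G (Set.Icc 0 a₀) := hGc.mono hIccP
  have hGcM : ContinuousOn G (Set.Icc b₀ 0) := hGc.mono hIccM
  have h0P : (0:ℝ) ∈ Set.Icc (0:ℝ) a₀ := ⟨le_rfl, ha₀.le⟩
  have h0M : (0:ℝ) ∈ Set.Icc b₀ (0:ℝ) := ⟨hb₀.le, le_rfl⟩
  have haP : a₀ ∈ Set.Icc (0:ℝ) a₀ := ⟨ha₀.le, le_rfl⟩
  have hbM : b₀ ∈ Set.Icc b₀ (0:ℝ) := ⟨le_rfl, hb₀.le⟩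
  -- the compact set E
  set s : Set (ℝ × ℝ) := Set.Icc 0 a₀ ×ˢ Set.Icc b₀ 0 with hs
  have hscomp : IsCompact s := isCompact_Icc.prod isCompact_Icc
  have hsclosed : IsClosed s := isClosed_Icc.prod isClosed_Icc
  have hφ : ContinuousOn (fun p : ℝ × ℝ => (G p.1 - G p.2, Fp p.1 + Fm p.2)) s := by
    apply ContinuousOn.prodMk
    · exact (hGcP.comp continuous_fst.continuousOn fun p hp => hp.1).sub
        (hGcM.comp continuous_snd.continuousOn fun p hp => hp.2)
    · exact (hFpc.comp continuous_fst.continuousOn fun p hp => hp.1).add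
        (hFmc.comp continuous_snd.continuousOn fun p hp => hp.2)
  set E : Set (ℝ × ℝ) :=
    s ∩ (fun p : ℝ × ℝ => (G p.1 - G p.2, Fp p.1 + Fm p.2)) ⁻¹' ({0} ×ˢ Set.Iic d) with hEdef
  have hEclosed : IsClosed E :=
    hφ.preimage_isClosed_of_isClosed hsclosed (isClosed_singleton.prod isClosed_Iic)
  have hEcomp : IsCompact E := hscomp.of_isClosed_subset hEclosed Set.inter_subset_left
  have hmemE : ∀ p : ℝ × ℝ, p ∈ E ↔
      p.1 ∈ Set.Icc (0:ℝ) a₀ ∧ p.2 ∈ Set.Icc b₀ (0:ℝ) ∧ G p.1 = G p.2 ∧ Fp p.1 + Fm p.2 ≤ d := by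
    intro p
    simp only [hEdef, Set.mem_inter_iff, Set.mem_preimage, Set.mem_prod, Set.mem_singleton_iff,
      Set.mem_Iic, hs]
    constructor
    · rintro ⟨⟨h1, h2⟩, h3, h4⟩
      exact ⟨h1, h2, sub_eq_zero.mp h3, h4⟩
    · rintro ⟨h1, h2, h3, h4⟩
      exact ⟨⟨h1, h2⟩, sub_eq_zero.mpr h3, h4⟩
  set S : Set ℝ := Prod.fst '' E with hSdef
  have hScomp : IsCompact S := hEcomp.image continuous_fst
  have hSne : S.Nonempty := by
    refine ⟨0, ⟨(0, 0), ?_, rfl⟩⟩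
    rw [hmemE]
    exact ⟨h0P, h0M, rfl, by rw [hFp0, hFm0]; linarith⟩
  set A : ℝ := sSup S with hAdef
  have hAS : A ∈ S := hScomp.sSup_mem hSne
  have hle_A : ∀ a ∈ S, a ≤ A := fun a ha => le_csSup hScomp.bddAbove ha
  obtain ⟨p, hpE, hp1⟩ := hAS
  rw [hmemE] at hpE
  obtain ⟨hA_mem, hb'_mem, hGab', hsum'⟩ := hpE
  rw [hp1] at hA_mem hGab' hsum'
  set b' : ℝ := p.2 with hb'def
  -- the level set L
  set L : Set ℝ := Set.Icc b₀ 0 ∩ G ⁻¹' {G A} with hLdef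
  have hLclosed : IsClosed L :=
    hGcM.preimage_isClosed_of_isClosed isClosed_Icc isClosed_singleton
  have hLcomp : IsCompact L := isCompact_Icc.of_isClosed_subset hLclosed Set.inter_subset_left
  have hb'L : b' ∈ L := ⟨hb'_mem, by simpa using hGab'.symm⟩
  set B : ℝ := sInf L with hBdef
  have hBL : B ∈ L := hLcomp.sInf_mem ⟨b', hb'L⟩
  have hB_le : ∀ b ∈ L, B ≤ b := fun b hb => csInf_le hLcomp.bddBelow hb
  obtain ⟨hB_mem, hGB⟩ := hBL
  have hGB : G B = G A := by simpa using hGB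
  have hBb' : B ≤ b' := hB_le b' hb'L
  by_cases hcase : d ≤ Fp A + Fm B
  · -- IVT on Fm over [B, b']
    have hconst : ∀ b ∈ Set.Icc B b', G b = G A := by
      intro b hb
      have hbM' : b ∈ Set.Icc b₀ (0:ℝ) := ⟨hB_mem.1.trans hb.1, hb.2.trans hb'_mem.2⟩
      have h1 : G b ≤ G B := hGanti hB_mem hbM' hb.1
      have h2 : G b' ≤ G b := hGanti hbM' hb'_mem hb.2
      rw [hGB] at h1
      rw [← hGab'] at h2
      linarith
    have hIcc : Set.Icc B b' ⊆ Set.Icc b₀ (0:ℝ) :=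
      Set.Icc_subset_Icc hB_mem.1 hb'_mem.2
    have hIVT := intermediate_value_Icc' hBb' (hFmc.mono hIcc)
    have hmem : d - Fp A ∈ Set.Icc (Fm b') (Fm B) := ⟨by linarith, by linarith⟩
    obtain ⟨b, hbIcc, hFb⟩ := hIVT hmem
    exact ⟨A, hA_mem, b, hIcc hbIcc, (hconst b hbIcc).symm, by linarith⟩
  · push_neg at hcase
    -- show A < a₀
    have h0A : (0:ℝ) ≤ A := hA_mem.1
    have hAa₀ : A < a₀ := by
      rcases lt_or_eq_of_le hA_mem.2 with h | h
      · exact h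
      · exfalso
        have hb₀L : b₀ ∈ L := ⟨hbM, by simp [h, hGend.symm]⟩
        have : B = b₀ := le_antisymm (hB_le b₀ hb₀L) hB_mem.1
        have hFpA : 0 < Fp A := by
          have := hFpm h0P hA_mem (by rw [h]; exact ha₀)
          rwa [hFp0] at this
        have : d ≤ Fm B := by rw [this]; exact hdmin.trans (min_le_right _ _)
        linarith
    -- the sequence aₙ ↓ A
    set aseq : ℕ → ℝ := fun n => A + (a₀ - A) * (1 / (n + 1)) with haseq
    have haseq_gt : ∀ n : ℕ, A < aseq n := by
      intro n
      have h1 : (0:ℝ) < 1 / ((n:ℝ) + 1) := by positivity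
      have : 0 < (a₀ - A) * (1 / (n + 1)) := by
        apply mul_pos (by linarith) h1
      simp only [haseq]; linarith
    have haseq_le : ∀ n : ℕ, aseq n ≤ a₀ := by
      intro n
      have h1 : 1 / ((n:ℝ) + 1) ≤ 1 := by
        rw [div_le_one (by positivity)]; simp
      have h2 : (a₀ - A) * (1 / (n + 1)) ≤ (a₀ - A) * 1 :=
        mul_le_mul_of_nonneg_left h1 (by linarith)
      simp only [haseq]; linarith
    have haseq_mem : ∀ n : ℕ, aseq n ∈ Set.Icc (0:ℝ) a₀ :=
      fun n => ⟨h0A.trans (haseq_gt n).le, haseq_le n⟩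
    have haseq_tendsto : Filter.Tendsto aseq Filter.atTop (nhds A) := by
      have h1 : Filter.Tendsto (fun n : ℕ => (a₀ - A) * (1 / ((n:ℝ) + 1)))
          Filter.atTop (nhds 0) := by
        have := tendsto_one_div_add_atTop_nhds_zero_nat.const_mul (a₀ - A)
        simpa using this
      have h2 := Filter.Tendsto.const_add A h1
      simpa only [add_zero] using h2
    -- choose bseq via IVT on [b₀, B]
    have hB0 : B ≤ 0 := hB_mem.2
    have hIccB : Set.Icc b₀ B ⊆ Set.Icc b₀ (0:ℝ) := Set.Icc_subset_Icc le_rfl hB0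
    have hbseq_ex : ∀ n : ℕ, ∃ b ∈ Set.Icc b₀ B, G b = G (aseq n) := by
      intro n
      have hIVT := intermediate_value_Icc' hB_mem.1 (hGcM.mono hIccB)
      have h1 : G B ≤ G (aseq n) := by
        rw [hGB]; exact hGmono hA_mem (haseq_mem n) (haseq_gt n).le
      have h2 : G (aseq n) ≤ G b₀ := by
        rw [← hGend]; exact hGmono (haseq_mem n) haP (haseq_le n)
      obtain ⟨b, hb, hGb⟩ := hIVT ⟨h1, h2⟩
      exact ⟨b, hb, hGb⟩
    choose bseq hbseq_mem hbseq_eq using hbseq_ex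
    have hbseq_memM : ∀ n, bseq n ∈ Set.Icc b₀ (0:ℝ) := fun n => hIccB (hbseq_mem n)
    obtain ⟨β, hβ_mem, ψ, hψ, hβtend⟩ := isCompact_Icc.tendsto_subseq hbseq_memM
    have haψ : Filter.Tendsto (aseq ∘ ψ) Filter.atTop (nhds A) :=
      haseq_tendsto.comp hψ.tendsto_atTop
    -- G β = G A
    have htendβ : Filter.Tendsto (fun k => G (bseq (ψ k))) Filter.atTop (nhds (G β)) := by
      refine ((hGcM β hβ_mem).tendsto).comp ?_
      exact tendsto_nhdsWithin_of_tendsto_nhds_of_eventually_within _ hβtend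
        (Filter.Eventually.of_forall fun k => hbseq_memM (ψ k))
    have htendβ' : Filter.Tendsto (fun k => G (bseq (ψ k))) Filter.atTop (nhds (G A)) := by
      have h1 : Filter.Tendsto (fun k => G (aseq (ψ k))) Filter.atTop (nhds (G A)) := by
        refine ((hGcP A hA_mem).tendsto).comp ?_
        exact tendsto_nhdsWithin_of_tendsto_nhds_of_eventually_within _ haψ
          (Filter.Eventually.of_forall fun k => haseq_mem (ψ k))
      simpa only [hbseq_eq] using h1
    have hGβ : G β = G A := tendsto_nhds_unique htendβ htendβ'
    -- β = B
    have hβB : β = B := by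
      have h1 : B ≤ β := hB_le β ⟨hβ_mem, by simp [hGβ]⟩
      have h2 : β ≤ B :=
        le_of_tendsto hβtend (Filter.Eventually.of_forall fun k => (hbseq_mem (ψ k)).2)
      linarith
    -- the sum tends to Fp A + Fm B < d
    have htendsum : Filter.Tendsto (fun k => Fp (aseq (ψ k)) + Fm (bseq (ψ k)))
        Filter.atTop (nhds (Fp A + Fm B)) := by
      have h1 : Filter.Tendsto (fun k => Fp (aseq (ψ k))) Filter.atTop (nhds (Fp A)) := by
        refine ((hFpc A hA_mem).tendsto).comp ?_
        exact tendsto_nhdsWithin_of_tendsto_nhds_of_eventually_within _ haψ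
          (Filter.Eventually.of_forall fun k => haseq_mem (ψ k))
      have h2 : Filter.Tendsto (fun k => Fm (bseq (ψ k))) Filter.atTop (nhds (Fm B)) := by
        rw [← hβB]
        refine ((hFmc β hβ_mem).tendsto).comp ?_
        exact tendsto_nhdsWithin_of_tendsto_nhds_of_eventually_within _ hβtend
          (Filter.Eventually.of_forall fun k => hbseq_memM (ψ k))
      exact h1.add h2
    obtain ⟨k, hk⟩ := (htendsum.eventually_lt_const hcase).exists
    -- contradiction with sup
    exfalso
    have hkS : aseq (ψ k) ∈ S := by
      refine ⟨(aseq (ψ k), bseq (ψ k)), ?_, rfl⟩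
      rw [hmemE]
      exact ⟨haseq_mem (ψ k), hbseq_memM (ψ k), (hbseq_eq (ψ k)).symm, hk.le⟩
    exact absurd (hle_A _ hkS) (not_le.mpr (haseq_gt (ψ k)))
end
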